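/- arXiv:1312.2890 — 2 statements merged into one kernel-verified Lean document; each statement's English description precedes it below -/
import Mathlib

section
/- For real β with 1 ≤ β ≤ 3/2, real k, and any positive integer n, the upper incomplete gamma function satisfies |Γ(β + 1 + ik, πn²)| < 2π²n⁴ e^{-πn²}. -/
/-!
On `(a, ∞)` with `a ≥ 1` and `Re s ≤ 2` the integrand `e^{-l} l^s` has modulus at most
`e^{-l} l²`, whose integral is `(a² + 2a + 2) e^{-a}` since `-(l² + 2l + 2) e^{-l}` is a
primitive. For `a = πn² > 3` this is below `2a² e^{-a}`.
-/

open Complex Real MeasureTheory Set Filter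

lemma hasDerivAt_neg_quadratic_mul_exp_neg (x : ℝ) :
    HasDerivAt (fun t : ℝ => -(t ^ 2 + 2 * t + 2) * rexp (-t)) (rexp (-x) * x ^ 2) x := by
  have hpoly : HasDerivAt (fun t : ℝ => -(t ^ 2 + 2 * t + 2)) (-(2 * x + 2)) x := by
    simpa [add_assoc, add_comm, add_left_comm, mul_comm] using
      ((hasDerivAt_pow 2 x).fun_add (((hasDerivAt_id x).const_mul 2).add_const 2)).fun_neg
  have hexp : HasDerivAt (fun t : ℝ => rexp (-t)) (-rexp (-x)) x := by
    simpa using (hasDerivAt_neg x).exp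
  exact (hpoly.fun_mul hexp).congr_deriv (by ring)

lemma tendsto_neg_quadratic_mul_exp_neg_atTop :
    Tendsto (fun t : ℝ => -(t ^ 2 + 2 * t + 2) * rexp (-t)) atTop (nhds 0) := by
  have h := (((tendsto_pow_mul_exp_neg_atTop_nhds_zero 2).add
    ((tendsto_pow_mul_exp_neg_atTop_nhds_zero 1).const_mul 2)).add
    ((tendsto_pow_mul_exp_neg_atTop_nhds_zero 0).const_mul 2)).neg
  simp only [pow_one, pow_zero, one_mul, mul_zero, add_zero, neg_zero] at h
  exact h.congr fun t => by ring

lemma integrableOn_Ioi_exp_neg_mul_sq (a : ℝ) :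
    IntegrableOn (fun x : ℝ => rexp (-x) * x ^ 2) (Ioi a) :=
  integrableOn_Ioi_deriv_of_nonneg' (fun x _ => hasDerivAt_neg_quadratic_mul_exp_neg x)
    (fun x _ => by positivity) tendsto_neg_quadratic_mul_exp_neg_atTop

lemma integral_Ioi_exp_neg_mul_sq (a : ℝ) :
    ∫ x in Ioi a, rexp (-x) * x ^ 2 = (a ^ 2 + 2 * a + 2) * rexp (-a) := by
  rw [integral_Ioi_of_hasDerivAt_of_nonneg' (fun x _ => hasDerivAt_neg_quadratic_mul_exp_neg x)
    (fun x _ => by positivity) tendsto_neg_quadratic_mul_exp_neg_atTop]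
  ring

lemma norm_exp_neg_mul_cpow_le {x : ℝ} (hx : 1 ≤ x) {s : ℂ} (hs : s.re ≤ 2) :
    ‖(rexp (-x) : ℂ) * (x : ℂ) ^ s‖ ≤ rexp (-x) * x ^ 2 := by
  rw [norm_mul, Complex.norm_real, Real.norm_of_nonneg (exp_pos _).le,
    Complex.norm_cpow_eq_rpow_re_of_pos (by linarith)]
  gcongr
  calc x ^ s.re ≤ x ^ (2 : ℝ) := Real.rpow_le_rpow_of_exponent_le hx hs
    _ = x ^ 2 := Real.rpow_two x

lemma norm_integral_Ioi_exp_neg_mul_cpow_le {a : ℝ} (ha : 1 ≤ a) {s : ℂ} (hs : s.re ≤ 2) :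
    ‖∫ l in Ioi a, (rexp (-l) : ℂ) * (l : ℂ) ^ s‖ ≤
      (a ^ 2 + 2 * a + 2) * rexp (-a) := by
  rw [← integral_Ioi_exp_neg_mul_sq]
  refine norm_integral_le_of_norm_le (integrableOn_Ioi_exp_neg_mul_sq a) ?_
  filter_upwards [ae_restrict_mem measurableSet_Ioi] with x hx
  exact norm_exp_neg_mul_cpow_le (ha.trans (le_of_lt hx)) hs

theorem stmt_11_general (β : ℝ) (hβ₂ : β ≤ 3 / 2) (k : ℝ) (n : ℕ) (hn : 1 ≤ n) :
    ‖(∫ l in Set.Ioi (π * (n : ℝ) ^ 2),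
        (Real.exp (-l) : ℂ) * (l : ℂ) ^ ((β : ℂ) + Complex.I * k))‖ <
      2 * π ^ 2 * (n : ℝ) ^ 4 * Real.exp (-π * (n : ℝ) ^ 2) := by
  set a : ℝ := π * (n : ℝ) ^ 2
  have ha : 3 < a := by
    have hn2 : (1 : ℝ) ≤ (n : ℝ) ^ 2 := one_le_pow₀ (by exact_mod_cast hn)
    nlinarith [pi_gt_three]
  have hs : ((β : ℂ) + I * k).re ≤ 2 := by
    simp only [add_re, ofReal_re, mul_re, I_re, I_im, ofReal_im]; linarith
  calc _ ≤ (a ^ 2 + 2 * a + 2) * rexp (-a) :=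
        norm_integral_Ioi_exp_neg_mul_cpow_le (by linarith) hs
    _ < 2 * a ^ 2 * rexp (-a) := by gcongr; nlinarith
    _ = _ := by simp only [a, neg_mul]; ring

/-- For `1 ≤ β ≤ 3/2`, real `k`, and any positive integer `n`, the upper incomplete
gamma function satisfies `|Γ(β+1+ik, πn²)| < 2π²n⁴ e^{-πn²}`. -/
theorem stmt_11 (β : ℝ) (hβ₁ : 1 ≤ β) (hβ₂ : β ≤ 3 / 2) (k : ℝ) (n : ℕ) (hn : 1 ≤ n) :
    ‖(∫ l in Set.Ioi (π * (n : ℝ) ^ 2),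
        (Real.exp (-l) : ℂ) * (l : ℂ) ^ ((β : ℂ) + Complex.I * k))‖ <
      2 * π ^ 2 * (n : ℝ) ^ 4 * Real.exp (-π * (n : ℝ) ^ 2) :=
  stmt_11_general β hβ₂ k n hn
end

section
/- With Ψ(y) = ∑_{n=1}^∞ e^{-πn²y}, the identity 1/2 + Ψ(1) + 4Ψ'(1) = 0 holds. -/
open Real

/-- `Ψ(y) = ∑_{n=1}^∞ e^{-πn²y}`. -/
noncomputable def Psi (y : ℝ) : ℝ := ∑' n : ℕ, Real.exp (-π * ((n : ℝ) + 1) ^ 2 * y)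

/-!
On the imaginary axis the Jacobi theta function is real, `θ(it) = 1 + 2Ψ(t)`, and the
modular relation `θ(-1/τ) = (-iτ)^{1/2} θ(τ)` becomes `θ(i/t) = √t θ(it)`. Differentiating
this at the fixed point `t = 1` of `t ↦ 1/t` gives `-θ'(1) = θ(1)/2 + θ'(1)`, that is
`θ(1) + 4θ'(1) = 0`.
-/

open Complex Filter Topology

theorem add_four_mul_deriv_eq_zero_of_eventually_inv_eq_sqrt_mul {f : ℝ → ℝ}
    (hf : DifferentiableAt ℝ f 1) (hfe : ∀ᶠ t in 𝓝 1, f t⁻¹ = √t * f t) :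
    f 1 + 4 * deriv f 1 = 0 := by
  have hf' : HasDerivAt f (deriv f 1) 1⁻¹ := by
    rw [inv_one]
    exact hf.hasDerivAt
  have hinv : HasDerivAt (fun t : ℝ => f t⁻¹) (deriv f 1 * -(1 ^ 2)⁻¹) 1 :=
    hf'.comp 1 (hasDerivAt_inv one_ne_zero)
  have hsqrt : HasDerivAt (fun t : ℝ => √t * f t) (1 / (2 * √1) * f 1 + √1 * deriv f 1) 1 :=
    (Real.hasDerivAt_sqrt one_ne_zero).mul hf.hasDerivAt
  have h := (hinv.congr_of_eventuallyEq (hfe.mono fun _ ht => ht.symm)).unique hsqrt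
  norm_num at h
  linarith

theorem ofReal_one_add_two_mul_psi {t : ℝ} (ht : 0 < t) :
    ((1 + 2 * Psi t : ℝ) : ℂ) = jacobiTheta (t * I) := by
  have hterm (n : ℕ) : cexp (π * I * ((n : ℂ) + 1) ^ 2 * (t * I))
      = (Real.exp (-π * ((n : ℝ) + 1) ^ 2 * t) : ℂ) := by
    rw [ofReal_exp]
    congr 1
    push_cast
    linear_combination (π * ((n : ℂ) + 1) ^ 2 * t) * I_sq
  rw [jacobiTheta_eq_tsum_nat (by simpa using ht), Psi]
  simp only [hterm, ← ofReal_tsum]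
  norm_cast

theorem one_add_two_mul_psi_inv {t : ℝ} (ht : 0 < t) :
    1 + 2 * Psi t⁻¹ = √t * (1 + 2 * Psi t) := by
  apply ofReal_injective
  have h := jacobiTheta_S_smul ⟨t * I, by simpa using ht⟩
  rw [UpperHalfPlane.modular_S_smul] at h
  have hS : (-(t * I : ℂ))⁻¹ = (t⁻¹ : ℝ) * I := by
    rw [← neg_inv, mul_inv, inv_I]
    push_cast
    ring
  have hsqrt : (-I * (t * I)) ^ (1 / 2 : ℂ) = (√t : ℝ) := by
    rw [show -I * (t * I) = (t : ℂ) by linear_combination (-(t : ℂ)) * I_sq,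
      Real.sqrt_eq_rpow, ofReal_cpow ht.le]
    norm_num
  simp only at h
  rw [hS, hsqrt] at h
  rw [ofReal_one_add_two_mul_psi (inv_pos.2 ht), h, ofReal_mul, ofReal_one_add_two_mul_psi ht]

theorem differentiableAt_psi {t : ℝ} (ht : 0 < t) : DifferentiableAt ℝ Psi t := by
  have htheta : DifferentiableAt ℝ (fun s : ℝ => jacobiTheta (s * I)) t :=
    ((differentiableAt_jacobiTheta (by simpa using ht)).restrictScalars ℝ).comp t
      (ofRealCLM.differentiableAt.mul_const I)
  refine ((reCLM.differentiableAt.comp t htheta).sub_const 1).div_const 2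
    |>.congr_of_eventuallyEq ?_
  filter_upwards [Ioi_mem_nhds ht] with s hs
  simp [← ofReal_one_add_two_mul_psi hs]

/-- `1/2 + Ψ(1) + 4Ψ'(1) = 0`, a consequence of the modular transformation of the
Jacobi theta function at `y = 1`. -/
theorem stmt_17 : 1 / 2 + Psi 1 + 4 * deriv Psi 1 = 0 := by
  have hPsi := differentiableAt_psi one_pos
  have h := add_four_mul_deriv_eq_zero_of_eventually_inv_eq_sqrt_mul
    ((hPsi.const_mul 2).const_add 1)
    (eventually_gt_nhds one_pos |>.mono fun t ht => one_add_two_mul_psi_inv ht)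
  rw [deriv_const_add, deriv_const_mul _ hPsi] at h
  linarith
end
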